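/- Let U ⊆ ℝ² be open, Γ a torsion-free affine connection on U, and M_{ij} : U → ℝ (i,j ∈ {1,2}) arbitrary smooth functions. On W = U×ℝ²×ℝ² with coordinates (x¹,x²,ξ₁,ξ₂,π¹,π²) define the smooth vector fields Θ = Σ_i π^i ∂_{x^i} + Σ_{i,j} π^i (Σ_k Γ^k_{ij}ξ_k − ξ_iξ_j − M_{ij}) ∂_{ξ_j} − Σ_{i,j,k} Γ^k_{ij} π^i π^j ∂_{π^k} and φ = Σ_{i,j} ε_{ij} π^i ∂_{ξ_j}, where ε_{12} = 1 = −ε_{21}, ε_{11} = ε_{22} = 0. Then the Lie bracket satisfies [Θ, φ] = (Σ_j π^j ξ_j − Σ_{j,k} π^j Γ^k_{jk}) · φ at every point of W. In particular, the distribution spanned by Θ and φ (the twistor distribution of the projective-to-Einstein lift) is Frobenius integrable, and the result is independent of M. -/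

import Mathlib

noncomputable section
open Matrix

/-- Points of the plane. -/
abbrev Pt2 : Type := Fin 2 → ℝ
/-- Points of `W = U × ℝ² × ℝ²`, coordinates `(x¹, x², ξ₁, ξ₂, π¹, π²)`. -/
abbrev Pt6 : Type := Fin 6 → ℝ

/-- Partial derivative of a function on the plane. -/
def pd2 (i : Fin 2) (f : Pt2 → ℝ) (x : Pt2) : ℝ := fderiv ℝ f x (Pi.single i 1)
/-- Partial derivative of a function on `ℝ⁶`. -/
def pd6 (a : Fin 6) (f : Pt6 → ℝ) (p : Pt6) : ℝ := fderiv ℝ f p (Pi.single a 1)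

/-- Base point `(x¹,x²)` of a point of `W`. -/
def bpt6 (p : Pt6) : Pt2 := ![p 0, p 1]
/-- The coordinates `(ξ₁,ξ₂)` of a point of `W`. -/
def xiv (p : Pt6) : Fin 2 → ℝ := ![p 2, p 3]
/-- The coordinates `(π¹,π²)` of a point of `W`. -/
def piv (p : Pt6) : Fin 2 → ℝ := ![p 4, p 5]

/-- An affine connection: `conn k i j` is the Christoffel symbol `Γ^k_{ij}`. -/
abbrev Conn : Type := Fin 2 → Fin 2 → Fin 2 → Pt2 → ℝ

/-- The alternating symbol `ε_{12} = 1 = −ε_{21}`, `ε_{11} = ε_{22} = 0`. -/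
def eps : Fin 2 → Fin 2 → ℝ := ![![0, 1], ![-1, 0]]

/-- The charged geodesic spray
`Θ = Σ_i π^i ∂_{x^i} + Σ_{i,j} π^i (Σ_k Γ^k_{ij}ξ_k − ξ_iξ_j − M_{ij}) ∂_{ξ_j}
      − Σ_{i,j,k} Γ^k_{ij} π^i π^j ∂_{π^k}`, as a vector field on `ℝ⁶`. -/
def sprayVF (Γ : Conn) (M : Fin 2 → Fin 2 → Pt2 → ℝ) : Fin 6 → Pt6 → ℝ :=
  ![fun p => piv p 0,
    fun p => piv p 1,
    fun p => ∑ i, piv p i *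
      ((∑ k, Γ k i 0 (bpt6 p) * xiv p k) - xiv p i * xiv p 0 - M i 0 (bpt6 p)),
    fun p => ∑ i, piv p i *
      ((∑ k, Γ k i 1 (bpt6 p) * xiv p k) - xiv p i * xiv p 1 - M i 1 (bpt6 p)),
    fun p => -(∑ i, ∑ j, Γ 0 i j (bpt6 p) * piv p i * piv p j),
    fun p => -(∑ i, ∑ j, Γ 1 i j (bpt6 p) * piv p i * piv p j)]

/-- The Higgs vector field `φ = Σ_{i,j} ε_{ij} π^i ∂_{ξ_j}` on `ℝ⁶`. -/
def higgsVF : Fin 6 → Pt6 → ℝ :=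
  ![fun _ => 0,
    fun _ => 0,
    fun p => ∑ i, eps i 0 * piv p i,
    fun p => ∑ i, eps i 1 * piv p i,
    fun _ => 0,
    fun _ => 0]

/-- Lie bracket of vector fields on an open subset of `ℝ⁶`, componentwise. -/
def bracket6 (X Y : Fin 6 → Pt6 → ℝ) (a : Fin 6) (p : Pt6) : ℝ :=
  ∑ b, (X b p * pd6 b (Y a) p - Y b p * pd6 b (X a) p)

noncomputable def prj (c : Fin 6) : Pt6 →L[ℝ] ℝ := ContinuousLinearMap.proj c
noncomputable def B6 : Pt6 →L[ℝ] Pt2 := ContinuousLinearMap.pi ![prj 0, prj 1]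

lemma bpt6_eq_B6 : bpt6 = ⇑B6 := by
  funext q i; fin_cases i <;> simp [bpt6, B6, prj]

lemma hasFDerivAt_bpt6 (p : Pt6) : HasFDerivAt bpt6 B6 p := by
  rw [bpt6_eq_B6]; exact B6.hasFDerivAt

lemma hasFDerivAt_coord (c : Fin 6) (p : Pt6) :
    HasFDerivAt (fun q : Pt6 => q c) (prj c) p := (prj c).hasFDerivAt

lemma hasFDerivAt_base (h : Pt2 → ℝ) (p : Pt6) (hd : DifferentiableAt ℝ h (bpt6 p)) :
    HasFDerivAt (fun q => h (bpt6 q)) ((fderiv ℝ h (bpt6 p)).comp B6) p :=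
  hd.hasFDerivAt.comp p (hasFDerivAt_bpt6 p)

lemma B6_single2 : B6 (Pi.single (2 : Fin 6) (1:ℝ)) = 0 := by
  ext i; fin_cases i <;> simp [B6, prj, Pi.single_apply]

lemma B6_single3 : B6 (Pi.single (3 : Fin 6) (1:ℝ)) = 0 := by
  ext i; fin_cases i <;> simp [B6, prj, Pi.single_apply]

lemma prj_apply (c : Fin 6) (v : Pt6) : prj c v = v c := rfl

section PdLemmas

variable (Γ : Conn) (M : Fin 2 → Fin 2 → Pt2 → ℝ) (p : Pt6)

lemma pd_higgs_const (b : Fin 6) (a : Fin 6) (ha : a = 0 ∨ a = 1 ∨ a = 4 ∨ a = 5) :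
    pd6 b (higgsVF a) p = 0 := by
  have E : higgsVF a = fun _ : Pt6 => (0:ℝ) := by
    rcases ha with h | h | h | h <;> subst h <;> rfl
  unfold pd6; rw [E]; simp

lemma pd_higgs2 (b : Fin 6) : pd6 b (higgsVF 2) p = if b = 5 then -1 else 0 := by
  have E : higgsVF 2 = fun q : Pt6 => -q 5 := by
    funext q; simp [higgsVF, eps, piv, Fin.sum_univ_two]
  have hS := (hasFDerivAt_coord 5 p).neg
  simp only [Pi.mul_def, Pi.add_def, Pi.sub_def, Pi.neg_def] at hS
  beta_reduce at hS
  rw [← E] at hS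
  unfold pd6; rw [hS.fderiv]
  by_cases h : b = 5 <;> simp [h, prj_apply, Pi.single_apply]

lemma pd_higgs3 (b : Fin 6) : pd6 b (higgsVF 3) p = if b = 4 then 1 else 0 := by
  have E : higgsVF 3 = fun q : Pt6 => q 4 := by
    funext q; simp [higgsVF, eps, piv, Fin.sum_univ_two]
  have hS := hasFDerivAt_coord 4 p
  rw [← E] at hS
  unfold pd6; rw [hS.fderiv]
  by_cases h : b = 4 <;> simp [h, prj_apply, Pi.single_apply]

lemma pd_spray0 (b : Fin 6) : pd6 b (sprayVF Γ M 0) p = if b = 4 then 1 else 0 := by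
  have E : sprayVF Γ M 0 = fun q : Pt6 => q 4 := by funext q; simp [sprayVF, piv]
  have hS := hasFDerivAt_coord 4 p
  rw [← E] at hS
  unfold pd6; rw [hS.fderiv]
  by_cases h : b = 4 <;> simp [h, prj_apply, Pi.single_apply]

lemma pd_spray1 (b : Fin 6) : pd6 b (sprayVF Γ M 1) p = if b = 5 then 1 else 0 := by
  have E : sprayVF Γ M 1 = fun q : Pt6 => q 5 := by funext q; simp [sprayVF, piv]
  have hS := hasFDerivAt_coord 5 p
  rw [← E] at hS
  unfold pd6; rw [hS.fderiv]
  by_cases h : b = 5 <;> simp [h, prj_apply, Pi.single_apply]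

lemma hasFDerivAt_spray2
    (hdΓ : ∀ k i j, DifferentiableAt ℝ (Γ k i j) (bpt6 p))
    (hdM : ∀ i j, DifferentiableAt ℝ (M i j) (bpt6 p)) :
    ∃ L : Pt6 →L[ℝ] ℝ, HasFDerivAt (sprayVF Γ M 2) L p ∧
      L (Pi.single 2 1) = p 4 * Γ 0 0 0 (bpt6 p) - 2 * p 4 * p 2
          + p 5 * Γ 0 1 0 (bpt6 p) - p 5 * p 3 ∧
      L (Pi.single 3 1) = p 4 * Γ 1 0 0 (bpt6 p) + p 5 * Γ 1 1 0 (bpt6 p) - p 5 * p 2 := by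
  have E : sprayVF Γ M 2 = fun q : Pt6 =>
      q 4 * ((Γ 0 0 0 (bpt6 q) * q 2 + Γ 1 0 0 (bpt6 q) * q 3) - q 2 * q 2 - M 0 0 (bpt6 q))
      + q 5 * ((Γ 0 1 0 (bpt6 q) * q 2 + Γ 1 1 0 (bpt6 q) * q 3) - q 3 * q 2 - M 1 0 (bpt6 q)) := by
    funext q; simp [sprayVF, piv, xiv, Fin.sum_univ_two]
  have hS := ((hasFDerivAt_coord 4 p).mul
      ((((hasFDerivAt_base (Γ 0 0 0) p (hdΓ 0 0 0)).mul (hasFDerivAt_coord 2 p)).add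
        ((hasFDerivAt_base (Γ 1 0 0) p (hdΓ 1 0 0)).mul (hasFDerivAt_coord 3 p))).sub
          ((hasFDerivAt_coord 2 p).mul (hasFDerivAt_coord 2 p)) |>.sub
            (hasFDerivAt_base (M 0 0) p (hdM 0 0)))).add
    ((hasFDerivAt_coord 5 p).mul
      ((((hasFDerivAt_base (Γ 0 1 0) p (hdΓ 0 1 0)).mul (hasFDerivAt_coord 2 p)).add
        ((hasFDerivAt_base (Γ 1 1 0) p (hdΓ 1 1 0)).mul (hasFDerivAt_coord 3 p))).sub
          ((hasFDerivAt_coord 3 p).mul (hasFDerivAt_coord 2 p)) |>.sub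
            (hasFDerivAt_base (M 1 0) p (hdM 1 0))))
  simp only [Pi.mul_def, Pi.add_def, Pi.sub_def, Pi.neg_def] at hS
  beta_reduce at hS
  rw [← E] at hS
  refine ⟨_, hS, ?_, ?_⟩
  · simp [prj_apply, B6_single2, Pi.single_apply]; ring
  · simp [prj_apply, B6_single3, Pi.single_apply]; ring

lemma hasFDerivAt_spray3
    (hdΓ : ∀ k i j, DifferentiableAt ℝ (Γ k i j) (bpt6 p))
    (hdM : ∀ i j, DifferentiableAt ℝ (M i j) (bpt6 p)) :
    ∃ L : Pt6 →L[ℝ] ℝ, HasFDerivAt (sprayVF Γ M 3) L p ∧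
      L (Pi.single 2 1) = p 4 * Γ 0 0 1 (bpt6 p) - p 4 * p 3 + p 5 * Γ 0 1 1 (bpt6 p) ∧
      L (Pi.single 3 1) = p 4 * Γ 1 0 1 (bpt6 p) - p 4 * p 2
          + p 5 * Γ 1 1 1 (bpt6 p) - 2 * p 5 * p 3 := by
  have E : sprayVF Γ M 3 = fun q : Pt6 =>
      q 4 * ((Γ 0 0 1 (bpt6 q) * q 2 + Γ 1 0 1 (bpt6 q) * q 3) - q 2 * q 3 - M 0 1 (bpt6 q))
      + q 5 * ((Γ 0 1 1 (bpt6 q) * q 2 + Γ 1 1 1 (bpt6 q) * q 3) - q 3 * q 3 - M 1 1 (bpt6 q)) := by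
    funext q; simp [sprayVF, piv, xiv, Fin.sum_univ_two]
  have hS := ((hasFDerivAt_coord 4 p).mul
      ((((hasFDerivAt_base (Γ 0 0 1) p (hdΓ 0 0 1)).mul (hasFDerivAt_coord 2 p)).add
        ((hasFDerivAt_base (Γ 1 0 1) p (hdΓ 1 0 1)).mul (hasFDerivAt_coord 3 p))).sub
          ((hasFDerivAt_coord 2 p).mul (hasFDerivAt_coord 3 p)) |>.sub
            (hasFDerivAt_base (M 0 1) p (hdM 0 1)))).add
    ((hasFDerivAt_coord 5 p).mul
      ((((hasFDerivAt_base (Γ 0 1 1) p (hdΓ 0 1 1)).mul (hasFDerivAt_coord 2 p)).add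
        ((hasFDerivAt_base (Γ 1 1 1) p (hdΓ 1 1 1)).mul (hasFDerivAt_coord 3 p))).sub
          ((hasFDerivAt_coord 3 p).mul (hasFDerivAt_coord 3 p)) |>.sub
            (hasFDerivAt_base (M 1 1) p (hdM 1 1))))
  simp only [Pi.mul_def, Pi.add_def, Pi.sub_def, Pi.neg_def] at hS
  beta_reduce at hS
  rw [← E] at hS
  refine ⟨_, hS, ?_, ?_⟩
  · simp [prj_apply, B6_single2, Pi.single_apply]; ring
  · simp [prj_apply, B6_single3, Pi.single_apply]; ring

lemma hasFDerivAt_spray4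
    (hdΓ : ∀ k i j, DifferentiableAt ℝ (Γ k i j) (bpt6 p)) :
    ∃ L : Pt6 →L[ℝ] ℝ, HasFDerivAt (sprayVF Γ M 4) L p ∧
      L (Pi.single 2 1) = 0 ∧ L (Pi.single 3 1) = 0 := by
  have E : sprayVF Γ M 4 = fun q : Pt6 =>
      -((Γ 0 0 0 (bpt6 q) * q 4 * q 4 + Γ 0 0 1 (bpt6 q) * q 4 * q 5)
        + (Γ 0 1 0 (bpt6 q) * q 5 * q 4 + Γ 0 1 1 (bpt6 q) * q 5 * q 5)) := by
    rw [show sprayVF Γ M 4 = fun q => -(∑ i, ∑ j, Γ 0 i j (bpt6 q) * piv q i * piv q j) from rfl]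
    funext q; simp [piv, Fin.sum_univ_two]
  have hS := ((((hasFDerivAt_base (Γ 0 0 0) p (hdΓ 0 0 0)).mul (hasFDerivAt_coord 4 p)).mul
        (hasFDerivAt_coord 4 p)).add
      (((hasFDerivAt_base (Γ 0 0 1) p (hdΓ 0 0 1)).mul (hasFDerivAt_coord 4 p)).mul
        (hasFDerivAt_coord 5 p)) |>.add
    ((((hasFDerivAt_base (Γ 0 1 0) p (hdΓ 0 1 0)).mul (hasFDerivAt_coord 5 p)).mul
        (hasFDerivAt_coord 4 p)).add
      (((hasFDerivAt_base (Γ 0 1 1) p (hdΓ 0 1 1)).mul (hasFDerivAt_coord 5 p)).mul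
        (hasFDerivAt_coord 5 p)))).neg
  simp only [Pi.mul_def, Pi.add_def, Pi.sub_def, Pi.neg_def] at hS
  beta_reduce at hS
  rw [← E] at hS
  refine ⟨_, hS, ?_, ?_⟩
  · simp [prj_apply, B6_single2, Pi.single_apply]
  · simp [prj_apply, B6_single3, Pi.single_apply]

lemma hasFDerivAt_spray5
    (hdΓ : ∀ k i j, DifferentiableAt ℝ (Γ k i j) (bpt6 p)) :
    ∃ L : Pt6 →L[ℝ] ℝ, HasFDerivAt (sprayVF Γ M 5) L p ∧
      L (Pi.single 2 1) = 0 ∧ L (Pi.single 3 1) = 0 := by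
  have E : sprayVF Γ M 5 = fun q : Pt6 =>
      -((Γ 1 0 0 (bpt6 q) * q 4 * q 4 + Γ 1 0 1 (bpt6 q) * q 4 * q 5)
        + (Γ 1 1 0 (bpt6 q) * q 5 * q 4 + Γ 1 1 1 (bpt6 q) * q 5 * q 5)) := by
    rw [show sprayVF Γ M 5 = fun q => -(∑ i, ∑ j, Γ 1 i j (bpt6 q) * piv q i * piv q j) from rfl]
    funext q; simp [piv, Fin.sum_univ_two]
  have hS := ((((hasFDerivAt_base (Γ 1 0 0) p (hdΓ 1 0 0)).mul (hasFDerivAt_coord 4 p)).mul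
        (hasFDerivAt_coord 4 p)).add
      (((hasFDerivAt_base (Γ 1 0 1) p (hdΓ 1 0 1)).mul (hasFDerivAt_coord 4 p)).mul
        (hasFDerivAt_coord 5 p)) |>.add
    ((((hasFDerivAt_base (Γ 1 1 0) p (hdΓ 1 1 0)).mul (hasFDerivAt_coord 5 p)).mul
        (hasFDerivAt_coord 4 p)).add
      (((hasFDerivAt_base (Γ 1 1 1) p (hdΓ 1 1 1)).mul (hasFDerivAt_coord 5 p)).mul
        (hasFDerivAt_coord 5 p)))).neg
  simp only [Pi.mul_def, Pi.add_def, Pi.sub_def, Pi.neg_def] at hS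
  beta_reduce at hS
  rw [← E] at hS
  refine ⟨_, hS, ?_, ?_⟩
  · simp [prj_apply, B6_single2, Pi.single_apply]
  · simp [prj_apply, B6_single3, Pi.single_apply]

end PdLemmas
/-- The twistor distribution of the projective-to-Einstein lift is Frobenius
integrable: `[Θ, φ] = (Σ_j π^j ξ_j − Σ_{j,k} π^j Γ^k_{jk}) · φ`, independently of `M`. -/
theorem spray_higgs_bracket
    (U : Set Pt2) (hUopen : IsOpen U)
    (Γ : Conn) (hΓsmooth : ∀ k i j, ContDiffOn ℝ (⊤ : ℕ∞) (Γ k i j) U)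
    (hΓsym : ∀ k i j, ∀ x ∈ U, Γ k i j x = Γ k j i x)
    (M : Fin 2 → Fin 2 → Pt2 → ℝ) (hMsmooth : ∀ i j, ContDiffOn ℝ (⊤ : ℕ∞) (M i j) U)
    (p : Pt6) (hp : bpt6 p ∈ U) (a : Fin 6) :
    bracket6 (sprayVF Γ M) higgsVF a p
      = ((∑ j, piv p j * xiv p j) - ∑ j, ∑ k, piv p j * Γ k j k (bpt6 p))
          * higgsVF a p := by
  have hdΓ : ∀ k i j, DifferentiableAt ℝ (Γ k i j) (bpt6 p) := fun k i j =>
    ((hΓsmooth k i j).contDiffAt (hUopen.mem_nhds hp)).differentiableAt (by simp)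
  have hdM : ∀ i j, DifferentiableAt ℝ (M i j) (bpt6 p) := fun i j =>
    ((hMsmooth i j).contDiffAt (hUopen.mem_nhds hp)).differentiableAt (by simp)
  obtain ⟨L2, hL2, hL2a, hL2b⟩ := hasFDerivAt_spray2 Γ M p hdΓ hdM
  obtain ⟨L3, hL3, hL3a, hL3b⟩ := hasFDerivAt_spray3 Γ M p hdΓ hdM
  obtain ⟨L4, hL4, hL4a, hL4b⟩ := hasFDerivAt_spray4 Γ M p hdΓ
  obtain ⟨L5, hL5, hL5a, hL5b⟩ := hasFDerivAt_spray5 Γ M p hdΓ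
  have hs22 : pd6 2 (sprayVF Γ M 2) p = p 4 * Γ 0 0 0 (bpt6 p) - 2 * p 4 * p 2
      + p 5 * Γ 0 1 0 (bpt6 p) - p 5 * p 3 := by unfold pd6; rw [hL2.fderiv]; exact hL2a
  have hs32 : pd6 3 (sprayVF Γ M 2) p = p 4 * Γ 1 0 0 (bpt6 p) + p 5 * Γ 1 1 0 (bpt6 p)
      - p 5 * p 2 := by unfold pd6; rw [hL2.fderiv]; exact hL2b
  have hs23 : pd6 2 (sprayVF Γ M 3) p = p 4 * Γ 0 0 1 (bpt6 p) - p 4 * p 3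
      + p 5 * Γ 0 1 1 (bpt6 p) := by unfold pd6; rw [hL3.fderiv]; exact hL3a
  have hs33 : pd6 3 (sprayVF Γ M 3) p = p 4 * Γ 1 0 1 (bpt6 p) - p 4 * p 2
      + p 5 * Γ 1 1 1 (bpt6 p) - 2 * p 5 * p 3 := by unfold pd6; rw [hL3.fderiv]; exact hL3b
  have hs24 : pd6 2 (sprayVF Γ M 4) p = 0 := by unfold pd6; rw [hL4.fderiv]; exact hL4a
  have hs34 : pd6 3 (sprayVF Γ M 4) p = 0 := by unfold pd6; rw [hL4.fderiv]; exact hL4b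
  have hs25 : pd6 2 (sprayVF Γ M 5) p = 0 := by unfold pd6; rw [hL5.fderiv]; exact hL5a
  have hs35 : pd6 3 (sprayVF Γ M 5) p = 0 := by unfold pd6; rw [hL5.fderiv]; exact hL5b
  have hh0 : ∀ b, pd6 b (higgsVF 0) p = 0 := fun b => pd_higgs_const p b 0 (by norm_num)
  have hh1 : ∀ b, pd6 b (higgsVF 1) p = 0 := fun b => pd_higgs_const p b 1 (by norm_num)
  have hh4 : ∀ b, pd6 b (higgsVF 4) p = 0 := fun b => pd_higgs_const p b 4 (by norm_num)
  have hh5 : ∀ b, pd6 b (higgsVF 5) p = 0 := fun b => pd_higgs_const p b 5 (by norm_num)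
  have v0 : sprayVF Γ M 0 p = p 4 := rfl
  have v1 : sprayVF Γ M 1 p = p 5 := rfl
  have v2 : sprayVF Γ M 2 p
      = p 4 * ((Γ 0 0 0 (bpt6 p) * p 2 + Γ 1 0 0 (bpt6 p) * p 3) - p 2 * p 2 - M 0 0 (bpt6 p))
      + p 5 * ((Γ 0 1 0 (bpt6 p) * p 2 + Γ 1 1 0 (bpt6 p) * p 3) - p 3 * p 2 - M 1 0 (bpt6 p)) := by
    simp [sprayVF, piv, xiv, Fin.sum_univ_two]
  have v3 : sprayVF Γ M 3 p
      = p 4 * ((Γ 0 0 1 (bpt6 p) * p 2 + Γ 1 0 1 (bpt6 p) * p 3) - p 2 * p 3 - M 0 1 (bpt6 p))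
      + p 5 * ((Γ 0 1 1 (bpt6 p) * p 2 + Γ 1 1 1 (bpt6 p) * p 3) - p 3 * p 3 - M 1 1 (bpt6 p)) := by
    simp [sprayVF, piv, xiv, Fin.sum_univ_two]
  have v4 : sprayVF Γ M 4 p
      = -((Γ 0 0 0 (bpt6 p) * p 4 * p 4 + Γ 0 0 1 (bpt6 p) * p 4 * p 5)
        + (Γ 0 1 0 (bpt6 p) * p 5 * p 4 + Γ 0 1 1 (bpt6 p) * p 5 * p 5)) := by
    rw [show sprayVF Γ M 4 p = -(∑ i, ∑ j, Γ 0 i j (bpt6 p) * piv p i * piv p j) from rfl]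
    simp [piv, Fin.sum_univ_two]
  have v5 : sprayVF Γ M 5 p
      = -((Γ 1 0 0 (bpt6 p) * p 4 * p 4 + Γ 1 0 1 (bpt6 p) * p 4 * p 5)
        + (Γ 1 1 0 (bpt6 p) * p 5 * p 4 + Γ 1 1 1 (bpt6 p) * p 5 * p 5)) := by
    rw [show sprayVF Γ M 5 p = -(∑ i, ∑ j, Γ 1 i j (bpt6 p) * piv p i * piv p j) from rfl]
    simp [piv, Fin.sum_univ_two]
  have w0 : higgsVF 0 p = 0 := rfl
  have w1 : higgsVF 1 p = 0 := rfl
  have w4 : higgsVF 4 p = 0 := rfl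
  have w5 : higgsVF 5 p = 0 := rfl
  have w2 : higgsVF 2 p = -p 5 := by simp [higgsVF, eps, piv, Fin.sum_univ_two]
  have w3 : higgsVF 3 p = p 4 := by simp [higgsVF, eps, piv, Fin.sum_univ_two]
  have vR : ((∑ j, piv p j * xiv p j) - ∑ j, ∑ k, piv p j * Γ k j k (bpt6 p))
      = (p 4 * p 2 + p 5 * p 3)
        - ((p 4 * Γ 0 0 0 (bpt6 p) + p 4 * Γ 1 0 1 (bpt6 p))
          + (p 5 * Γ 0 1 0 (bpt6 p) + p 5 * Γ 1 1 1 (bpt6 p))) := by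
    simp [piv, xiv, Fin.sum_univ_two]
  have ha : a = 0 ∨ a = 1 ∨ a = 2 ∨ a = 3 ∨ a = 4 ∨ a = 5 := by omega
  rcases ha with rfl | rfl | rfl | rfl | rfl | rfl <;>
    (unfold bracket6
     rw [Fin.sum_univ_six, vR]
     simp only [v0, v1, v2, v3, v4, v5, w0, w1, w2, w3, w4, w5, hh0, hh1, hh4, hh5,
       pd_higgs2, pd_higgs3, pd_spray0, pd_spray1, hs22, hs32, hs23, hs33, hs24, hs34, hs25, hs35,
       Fin.reduceEq, reduceIte]
     norm_num
     try ring)
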